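/- There is an absolute constant C > 0 with the following property. Let H ≥ 1 be an integer, let X_1, …, X_H be independent random variables uniformly distributed on the unit circle {z ∈ ℂ : |z| = 1}, set Z_H = X_1 + ⋯ + X_H and Z̃_H = Z_H/√(H/2). Then for all real numbers u, v with |u| ≤ H^{1/4} and |v| ≤ H^{1/4}, |E[exp(i u Re Z̃_H + i v Im Z̃_H)] − exp(−(u²+v²)/2)| ≤ C · exp(−(u²+v²)/2) · (u⁴+v⁴)/H. -/

import Mathlib

/-!
By independence, the characteristic function of `Z_H` at `w` is `φ(w) ^ H`, where `φ` is the
characteristic function of the uniform law on the circle. This law is invariant under `z ↦ -z`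
and `z ↦ i z`, so `φ(w) = E cos ⟪z, w⟫` is real and `E ⟪z, w⟫² = ‖w‖² / 2`. Together with
`1 - y²/2 ≤ cos y ≤ 1 - y²/2 + y⁴/24` and `|⟪z, w⟫| ≤ ‖w‖` on the circle, this traps `φ(w)`
between `1 - x` and `1 - x + x²`, where `x = ‖w‖² / 4`. Any such `A` satisfies
`|A ^ H - e^{-Hx}| ≤ 4 e^{-Hx} H x²` as soon as `H x² ≤ 1`; for `w = (u, v) / √(H/2)` we have
`H x = (u² + v²) / 2` and `H x² = (u² + v²)² / (4H)`, which is at most `1` when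
`|u|, |v| ≤ H^{1/4}`.
-/

open MeasureTheory ProbabilityTheory Complex Finset

/-- The uniform probability measure on the unit circle `{z ∈ ℂ : |z| = 1}`. -/
noncomputable def uniformCircle : Measure ℂ :=
  Measure.map (fun t : ℝ => Complex.exp (2 * Real.pi * t * Complex.I))
    (volume.restrict (Set.Icc 0 1))

open scoped Real InnerProductSpace

lemma Real.cos_le_one_sub_sq_div_two_add_pow_four_div (y : ℝ) :
    Real.cos y ≤ 1 - y ^ 2 / 2 + y ^ 4 / 24 := by
  wlog hy : 0 ≤ y generalizing y
  · have := this (-y) (by linarith)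
    rwa [Real.cos_neg, neg_sq, show (-y) ^ 4 = y ^ 4 by ring] at this
  rcases le_or_gt (y ^ 2) 24 with hy24 | hy24
  · have hs := Real.sin_ge_sub_cube (x := y / 2) (by positivity)
    have hs0 : 0 ≤ y / 2 - (y / 2) ^ 3 / 6 := by nlinarith
    have hcos : Real.cos y = 1 - 2 * Real.sin (y / 2) ^ 2 := by
      have := Real.cos_two_mul' (y / 2)
      rw [mul_div_cancel₀ y two_ne_zero] at this
      linarith [Real.sin_sq_add_cos_sq (y / 2)]
    calc Real.cos y ≤ 1 - 2 * (y / 2 - (y / 2) ^ 3 / 6) ^ 2 := by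
          nlinarith [pow_le_pow_left₀ hs0 hs 2]
      _ ≤ 1 - y ^ 2 / 2 + y ^ 4 / 24 := by nlinarith [pow_nonneg hy 6]
  · nlinarith [Real.cos_le_one y]

lemma Real.exp_neg_sub_two_mul_sq_le_one_sub {x : ℝ} (hx : x ≤ 1 / 2) :
    Real.exp (-x - 2 * x ^ 2) ≤ 1 - x := by
  have hpos : 0 < 1 - x := by linarith
  -- this is `log (1 - x) ≥ -x / (1 - x)`
  have hinv : 1 ≤ (1 - x) * Real.exp (x / (1 - x)) :=
    calc 1 = (1 - x) * (x / (1 - x) + 1) := by field_simp; ring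
      _ ≤ _ := mul_le_mul_of_nonneg_left (Real.add_one_le_exp _) hpos.le
  have hle : x / (1 - x) ≤ x + 2 * x ^ 2 := by
    rw [div_le_iff₀ hpos]; nlinarith
  calc Real.exp (-x - 2 * x ^ 2) ≤ Real.exp (-(x / (1 - x))) := Real.exp_le_exp.2 (by linarith)
    _ ≤ 1 - x := by rwa [Real.exp_neg, inv_le_iff_one_le_mul₀ (Real.exp_pos _)]

lemma abs_pow_sub_exp_neg_mul_le {n : ℕ} {x A : ℝ} (hn : 0 < n) (hx : 0 ≤ x)
    (hnx : n * x ^ 2 ≤ 1) (hA : 1 - x ≤ A) (hA' : A ≤ 1 - x + x ^ 2) :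
    |A ^ n - Real.exp (-(n * x))| ≤ 4 * Real.exp (-(n * x)) * (n * x ^ 2) := by
  have hn1 : (1 : ℝ) ≤ n := by exact_mod_cast hn
  have hx1 : x ≤ 1 := by nlinarith
  have hexp_pow (y : ℝ) : Real.exp y ^ n = Real.exp (n * y) := (Real.exp_nat_mul y n).symm
  have hE := Real.exp_pos (-(n * x))
  have hEs : 0 ≤ Real.exp (-(n * x)) * (n * x ^ 2) := by positivity
  rw [abs_le]
  constructor
  · rcases le_or_gt x (1 / 2) with hx2 | hx2
    · have hlow : Real.exp (-x - 2 * x ^ 2) ^ n ≤ A ^ n :=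
        pow_le_pow_left₀ (Real.exp_pos _).le
          ((Real.exp_neg_sub_two_mul_sq_le_one_sub hx2).trans hA) n
      rw [hexp_pow, show (n : ℝ) * (-x - 2 * x ^ 2) = -(n * x) + -(2 * (n * x ^ 2)) by ring,
        Real.exp_add] at hlow
      nlinarith [mul_le_mul_of_nonneg_left (Real.one_sub_le_exp_neg (2 * (n * x ^ 2))) hE.le]
    · -- here `n x² > 1/4`, so `A ^ n ≥ 0` is already good enough
      have hs : 1 ≤ 4 * (n * x ^ 2) := by nlinarith
      nlinarith [pow_nonneg (show 0 ≤ A by linarith) n, mul_le_mul_of_nonneg_left hs hE.le]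
  · have hup : A ^ n ≤ Real.exp (-x + x ^ 2) ^ n :=
      pow_le_pow_left₀ (by linarith) (by linarith [Real.add_one_le_exp (-x + x ^ 2)]) n
    rw [hexp_pow, show (n : ℝ) * (-x + x ^ 2) = -(n * x) + n * x ^ 2 by ring,
      Real.exp_add] at hup
    have hs : Real.exp (n * x ^ 2) ≤ 1 + 2 * (n * x ^ 2) := by
      have := Real.exp_bound' (by positivity) hnx (n := 1) one_pos
      norm_num at this; linarith
    nlinarith [mul_le_mul_of_nonneg_left hs hE.le]

lemma pow_four_le_of_abs_le_rpow {u y : ℝ} (hy : 0 ≤ y) (hu : |u| ≤ y ^ ((1 : ℝ) / 4)) :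
    u ^ 4 ≤ y :=
  calc u ^ 4 = |u| ^ 4 := (Even.pow_abs ⟨2, rfl⟩ u).symm
    _ ≤ (y ^ ((1 : ℝ) / 4)) ^ 4 := pow_le_pow_left₀ (abs_nonneg u) hu 4
    _ = y := by rw [← Real.rpow_natCast, ← Real.rpow_mul hy]; norm_num

lemma ProbabilityTheory.iIndepFun.charFun_map_fun_sum_eq_pow {Ω ι E : Type*}
    [MeasurableSpace Ω] {P : Measure Ω} [IsFiniteMeasure P] [Fintype ι] [NormedAddCommGroup E]
    [InnerProductSpace ℝ E] [MeasurableSpace E] [BorelSpace E] [SecondCountableTopology E]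
    {X : ι → Ω → E} (mX : ∀ i, AEMeasurable (X i) P) (hX : iIndepFun X P) {ν : Measure E}
    (hν : ∀ i, P.map (X i) = ν) :
    charFun (P.map fun ω ↦ ∑ i, X i ω) = charFun ν ^ Fintype.card ι := by
  rw [hX.charFun_map_fun_sum_eq_prod mX]
  simp [hν]

lemma inner_mk_div (z : ℂ) (u v c : ℝ) :
    ⟪z, ⟨u / c, v / c⟩⟫_ℝ = u * (z / c).re + v * (z / c).im := by
  simp only [Complex.inner, div_ofReal_re, div_ofReal_im, mul_re, conj_re, conj_im]
  ring

lemma inner_sq_add_inner_I_mul_sq (z w : ℂ) :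
    ⟪z, w⟫_ℝ ^ 2 + ⟪I * z, w⟫_ℝ ^ 2 = ‖z‖ ^ 2 * ‖w‖ ^ 2 := by
  simp only [Complex.inner, Complex.sq_norm, Complex.normSq_apply, mul_re, mul_im, conj_re,
    conj_im, I_re, I_im]
  ring

instance : IsProbabilityMeasure uniformCircle := by
  have : IsProbabilityMeasure (volume.restrict (Set.Icc (0 : ℝ) 1)) := ⟨by simp⟩
  exact Measure.isProbabilityMeasure_map (by fun_prop)

lemma Continuous.integrable_uniformCircle {E : Type*} [NormedAddCommGroup E] {g : ℂ → E}
    (hg : Continuous g) :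
    Integrable g uniformCircle :=
  (integrable_map_measure hg.aestronglyMeasurable (by fun_prop)).2
    (hg.comp (by fun_prop)).integrableOn_Icc

section UniformCircle

variable {E : Type*} [NormedAddCommGroup E] [NormedSpace ℝ E]

lemma integral_uniformCircle {g : ℂ → E} (hg : AEStronglyMeasurable g uniformCircle) :
    ∫ z, g z ∂uniformCircle = ∫ t in (0 : ℝ)..1, g (Complex.exp (2 * π * t * I)) := by
  rw [uniformCircle, integral_map (by fun_prop) hg, intervalIntegral.integral_of_le zero_le_one,
    integral_Icc_eq_integral_Ioc]

lemma ae_norm_eq_one_uniformCircle : ∀ᵐ z ∂uniformCircle, ‖z‖ = 1 := by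
  rw [uniformCircle, ae_map_iff (by fun_prop) (measurableSet_eq_fun (by fun_prop) (by fun_prop))]
  refine Filter.Eventually.of_forall fun t => ?_
  rw [show 2 * (π : ℂ) * t * I = ((2 * π * t : ℝ) : ℂ) * I by push_cast; ring,
    norm_exp_ofReal_mul_I]

lemma integral_uniformCircle_comp_exp_mul {g : ℂ → E} (hg : Continuous g) (s : ℝ) :
    ∫ z, g (Complex.exp (2 * π * s * I) * z) ∂uniformCircle = ∫ z, g z ∂uniformCircle := by
  rw [integral_uniformCircle (by fun_prop), integral_uniformCircle hg.aestronglyMeasurable]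
  have hper : Function.Periodic (fun t : ℝ => g (Complex.exp (2 * π * t * I))) 1 := fun t => by
    simp only [ofReal_add, ofReal_one, mul_add, add_mul, mul_one, Complex.exp_add,
      exp_two_pi_mul_I]
  simp_rw [← Complex.exp_add, ← add_mul, ← mul_add, ← ofReal_add, add_comm (s : ℝ)]
  rw [intervalIntegral.integral_comp_add_right (fun t : ℝ => g (Complex.exp (2 * π * t * I))),
    zero_add, add_comm 1 s, hper.intervalIntegral_add_eq s 0, zero_add]

end UniformCircle

lemma integral_sin_inner_uniformCircle (w : ℂ) : ∫ z, Real.sin ⟪z, w⟫_ℝ ∂uniformCircle = 0 := by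
  have h := integral_uniformCircle_comp_exp_mul (g := fun z => Real.sin ⟪z, w⟫_ℝ)
    (by fun_prop) (1 / 2)
  have hneg : Complex.exp (2 * π * ((1 / 2 : ℝ) : ℂ) * I) = -1 := by
    rw [← exp_pi_mul_I]; congr 1; push_cast; ring
  simp only [hneg, neg_one_mul, inner_neg_left, Real.sin_neg, integral_neg] at h
  linarith

lemma charFun_uniformCircle (w : ℂ) :
    charFun uniformCircle w = ((∫ z, Real.cos ⟪z, w⟫_ℝ ∂uniformCircle : ℝ) : ℂ) := by
  have hcos : Integrable (fun z : ℂ => (Real.cos ⟪z, w⟫_ℝ : ℂ)) uniformCircle :=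
    Continuous.integrable_uniformCircle (by fun_prop)
  have hsin : Integrable (fun z : ℂ => (Real.sin ⟪z, w⟫_ℝ : ℂ) * I) uniformCircle :=
    Continuous.integrable_uniformCircle (by fun_prop)
  simp_rw [charFun_apply, Complex.exp_mul_I, ← ofReal_cos, ← ofReal_sin]
  rw [integral_add hcos hsin, integral_mul_const, integral_complex_ofReal, integral_complex_ofReal,
    integral_sin_inner_uniformCircle]
  simp

lemma integral_inner_sq_uniformCircle (w : ℂ) :
    ∫ z, ⟪z, w⟫_ℝ ^ 2 ∂uniformCircle = ‖w‖ ^ 2 / 2 := by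
  have hI : Complex.exp (2 * π * ((1 / 4 : ℝ) : ℂ) * I) = I := by
    conv_rhs => rw [← exp_pi_div_two_mul_I]
    congr 1; push_cast; ring
  have h := integral_uniformCircle_comp_exp_mul (g := fun z => ⟪z, w⟫_ℝ ^ 2) (by fun_prop) (1 / 4)
  have hsum : ∫ z, (⟪z, w⟫_ℝ ^ 2 + ⟪I * z, w⟫_ℝ ^ 2) ∂uniformCircle = ‖w‖ ^ 2 := by
    rw [integral_congr_ae (ae_norm_eq_one_uniformCircle.mono fun z hz => by
      rw [inner_sq_add_inner_I_mul_sq, hz, one_pow, one_mul])]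
    simp
  rw [integral_add (Continuous.integrable_uniformCircle (by fun_prop))
    (Continuous.integrable_uniformCircle (by fun_prop))] at hsum
  simp only [hI] at h
  linarith

lemma one_sub_le_integral_cos_inner_uniformCircle (w : ℂ) :
    1 - ‖w‖ ^ 2 / 4 ≤ ∫ z, Real.cos ⟪z, w⟫_ℝ ∂uniformCircle := by
  calc 1 - ‖w‖ ^ 2 / 4 = ∫ z, (1 - ⟪z, w⟫_ℝ ^ 2 / 2) ∂uniformCircle := by
        rw [integral_sub (integrable_const _) (Continuous.integrable_uniformCircle (by fun_prop)),
          integral_div, integral_inner_sq_uniformCircle]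
        simp; ring
    _ ≤ _ := integral_mono (Continuous.integrable_uniformCircle (by fun_prop))
        (Continuous.integrable_uniformCircle (by fun_prop)) fun _ => Real.one_sub_sq_div_two_le_cos

lemma integral_cos_inner_uniformCircle_le (w : ℂ) :
    ∫ z, Real.cos ⟪z, w⟫_ℝ ∂uniformCircle ≤ 1 - ‖w‖ ^ 2 / 4 + ‖w‖ ^ 4 / 24 := by
  calc ∫ z, Real.cos ⟪z, w⟫_ℝ ∂uniformCircle
      ≤ ∫ z, (1 - ⟪z, w⟫_ℝ ^ 2 / 2 + ‖w‖ ^ 4 / 24) ∂uniformCircle := by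
        refine integral_mono_ae (Continuous.integrable_uniformCircle (by fun_prop))
          (Continuous.integrable_uniformCircle (by fun_prop))
          (ae_norm_eq_one_uniformCircle.mono fun z hz => ?_)
        have hsq : ⟪z, w⟫_ℝ ^ 2 ≤ ‖w‖ ^ 2 := by
          have := inner_sq_add_inner_I_mul_sq z w
          rw [hz, one_pow, one_mul] at this
          nlinarith [sq_nonneg ⟪I * z, w⟫_ℝ]
        have hsq4 := pow_le_pow_left₀ (sq_nonneg _) hsq 2
        have hcos := Real.cos_le_one_sub_sq_div_two_add_pow_four_div ⟪z, w⟫_ℝ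
        dsimp only
        nlinarith
    _ = 1 - ‖w‖ ^ 2 / 4 + ‖w‖ ^ 4 / 24 := by
        rw [integral_add (Continuous.integrable_uniformCircle (by fun_prop)) (integrable_const _),
          integral_sub (integrable_const _) (Continuous.integrable_uniformCircle (by fun_prop)),
          integral_div, integral_inner_sq_uniformCircle]
        simp; ring

lemma norm_charFun_map_sum_uniformCircle_sub_le {Ω ι : Type*} [MeasurableSpace Ω]
    {μ : Measure Ω} [IsFiniteMeasure μ] [Fintype ι] [Nonempty ι] {X : ι → Ω → ℂ}
    (hXm : ∀ j, AEMeasurable (X j) μ) (hXi : iIndepFun X μ)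
    (hXd : ∀ j, μ.map (X j) = uniformCircle) {w : ℂ}
    (hw : Fintype.card ι * (‖w‖ ^ 2 / 4) ^ 2 ≤ 1) :
    ‖charFun (μ.map fun ω ↦ ∑ j, X j ω) w - (Real.exp (-(Fintype.card ι * (‖w‖ ^ 2 / 4))) : ℂ)‖
      ≤ 4 * Real.exp (-(Fintype.card ι * (‖w‖ ^ 2 / 4))) *
        (Fintype.card ι * (‖w‖ ^ 2 / 4) ^ 2) := by
  rw [hXi.charFun_map_fun_sum_eq_pow hXm hXd, Pi.pow_apply, charFun_uniformCircle, ← ofReal_pow,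
    ← ofReal_sub, norm_real, Real.norm_eq_abs]
  refine abs_pow_sub_exp_neg_mul_le Fintype.card_pos (by positivity) hw
    (one_sub_le_integral_cos_inner_uniformCircle w)
    ((integral_cos_inner_uniformCircle_le w).trans ?_)
  nlinarith [sq_nonneg ‖w‖]

/-- Lemma 3.2: the characteristic function of the joint distribution of
`Re Z̃_H` and `Im Z̃_H` is close to the two-dimensional standard Gaussian one,
where `Z̃_H = (X_1 + ⋯ + X_H)/√(H/2)`. -/
theorem random_model_charFun_close_to_gaussian :
    ∃ C : ℝ, 0 < C ∧
      ∀ (H : ℕ), 1 ≤ H →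
      ∀ {Ω : Type} [MeasurableSpace Ω] (μ : Measure Ω) [IsProbabilityMeasure μ]
        (X : Fin H → Ω → ℂ), (∀ j, Measurable (X j)) →
        iIndepFun X μ →
        (∀ j, Measure.map (X j) μ = uniformCircle) →
      ∀ (u v : ℝ), |u| ≤ (H : ℝ) ^ ((1 : ℝ) / 4) → |v| ≤ (H : ℝ) ^ ((1 : ℝ) / 4) →
      norm
          ((∫ ω, Complex.exp (Complex.I *
              ((u * ((∑ j, X j ω) / (Real.sqrt ((H : ℝ) / 2) : ℂ)).re +
                v * ((∑ j, X j ω) / (Real.sqrt ((H : ℝ) / 2) : ℂ)).im : ℝ) : ℂ)) ∂μ) -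
            (Real.exp (-(u ^ 2 + v ^ 2) / 2) : ℂ))
        ≤ C * Real.exp (-(u ^ 2 + v ^ 2) / 2) * (u ^ 4 + v ^ 4) / H := by
  refine ⟨2, two_pos, fun H hH Ω _ μ _ X hXm hXi hXd u v hu hv => ?_⟩
  have : Nonempty (Fin H) := ⟨⟨0, hH⟩⟩
  have hHpos : (0 : ℝ) < H := by exact_mod_cast hH
  set c := Real.sqrt ((H : ℝ) / 2)
  have hc : c ^ 2 = H / 2 := Real.sq_sqrt (by positivity)
  set w : ℂ := ⟨u / c, v / c⟩
  have hcharFun : ∫ ω, Complex.exp (I * ((u * ((∑ j, X j ω) / (c : ℂ)).re +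
      v * ((∑ j, X j ω) / (c : ℂ)).im : ℝ) : ℂ)) ∂μ = charFun (μ.map fun ω ↦ ∑ j, X j ω) w := by
    rw [charFun_apply, integral_map (by fun_prop) (by fun_prop)]
    simp only [w, inner_mk_div, mul_comm I]
  have hx : ‖w‖ ^ 2 / 4 = (u ^ 2 + v ^ 2) / (2 * H) := by
    simp only [w, Complex.sq_norm, normSq_mk, ← sq, div_pow, hc]
    field_simp; ring
  have hu4 := pow_four_le_of_abs_le_rpow hHpos.le hu
  have hv4 := pow_four_le_of_abs_le_rpow hHpos.le hv
  have hsq : (u ^ 2 + v ^ 2) ^ 2 ≤ 2 * (u ^ 4 + v ^ 4) := by nlinarith [sq_nonneg (u ^ 2 - v ^ 2)]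
  have hHx : H * (‖w‖ ^ 2 / 4) = (u ^ 2 + v ^ 2) / 2 := by rw [hx]; field_simp
  have hHx2 : H * (‖w‖ ^ 2 / 4) ^ 2 = (u ^ 2 + v ^ 2) ^ 2 / (4 * H) := by
    rw [hx]; field_simp; ring
  have key := norm_charFun_map_sum_uniformCircle_sub_le (fun j => (hXm j).aemeasurable) hXi hXd
    (w := w) (by rw [Fintype.card_fin, hHx2, div_le_one (by positivity)]; linarith)
  rw [Fintype.card_fin, hHx, hHx2, ← neg_div] at key
  rw [hcharFun]
  calc _ ≤ _ := key
    _ = Real.exp (-(u ^ 2 + v ^ 2) / 2) * (u ^ 2 + v ^ 2) ^ 2 / H := by field_simp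
    _ ≤ Real.exp (-(u ^ 2 + v ^ 2) / 2) * (2 * (u ^ 4 + v ^ 4)) / H := by gcongr
    _ = _ := by ring
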